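/- Let w be a twisted involution and i ∈ B with ℓ(w · s i) < ℓ(w) and (s i)* · w · (s i) ≠ w. Then (s i)* · w · (s i) is a twisted involution and ℓ((s i)* · w · (s i)) = ℓ(w) − 2. -/

import Mathlib

/-!
Common setup: twisted Coxeter systems, involution words, braid/half-braid moves.
-/

noncomputable section
open scoped Classical

namespace TwistedCoxeter

variable {B : Type*} {W : Type*} [Group W] {M : CoxeterMatrix B}

/-- A twisting of a Coxeter system: a group automorphism `auto` of `W` with `auto ∘ auto = id`
together with an involution `star` of the index set, compatible on simple reflections. -/
structure Twisting (cs : CoxeterSystem M W) where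
  auto : W →* W
  star : B → B
  auto_auto : ∀ w, auto (auto w) = w
  star_star : ∀ i, star (star i) = i
  auto_simple : ∀ i, auto (cs.simple i) = cs.simple (star i)

/-- The trivial twisting. -/
def trivialTwisting (cs : CoxeterSystem M W) : Twisting cs where
  auto := MonoidHom.id W
  star := id
  auto_auto _ := rfl
  star_star _ := rfl
  auto_simple _ := rfl

variable {cs : CoxeterSystem M W}

/-- `w` is a twisted involution: `w* = w⁻¹`. -/
def IsTwistedInvolution (t : Twisting cs) (w : W) : Prop := t.auto w = w⁻¹

/-- One step of the recursion defining `iota`. -/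
def invStep (t : Twisting cs) (z : W) (i : B) : W :=
  if cs.length (z * cs.simple i) < cs.length z then z
  else if t.auto (cs.simple i) * z * cs.simple i = z then z * cs.simple i
  else t.auto (cs.simple i) * z * cs.simple i

/-- The twisted involution obtained from a word, via the "demazure-like" recursion
`ι([]) = 1`, `ι(a ++ [i]) = invStep (ι a) i`. -/
def iota (t : Twisting cs) (a : List B) : W := a.foldl (invStep t) 1

/-- `a` is an involution word for `w`: `ι(a) = w` and `a` has minimal length among
all words with this property. -/
def IsInvolutionWord (t : Twisting cs) (w : W) (a : List B) : Prop :=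
  iota t a = w ∧ ∀ b : List B, iota t b = w → a.length ≤ b.length

/-- The set `R̂(w)` of involution words for `w`. -/
def invWords (t : Twisting cs) (w : W) : Set (List B) := {a | IsInvolutionWord t w a}

/-- `ℓ̂(w)`: the minimal length of a word `a` with `ι(a) = w`. -/
def hatLength (t : Twisting cs) (w : W) : ℕ :=
  sInf {n | ∃ a : List B, iota t a = w ∧ a.length = n}

/-- The alternating word `[i, j, i, j, ...]` of length `m` (starting with `i`). -/
def altWord (i j : B) : ℕ → List B
  | 0 => []
  | n + 1 => i :: altWord j i n

/-- Words `a` and `b` differ by a braid move. -/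
def BraidMove (M : CoxeterMatrix B) (a b : List B) : Prop :=
  ∃ (u v : List B) (i j : B), i ≠ j ∧ M i j ≠ 0 ∧
    a = u ++ altWord i j (M i j) ++ v ∧ b = u ++ altWord j i (M i j) ++ v

/-- The quantity `m_*(i,j)`. -/
def mstar (t : Twisting cs) (i j : B) : ℕ :=
  if M i j ≠ 0 ∧ M i j % 2 = 1 ∧ ({t.star i, t.star j} : Set B) = {i, j} then
    (M i j + 1) / 2
  else if M i j ≠ 0 ∧ M i j % 2 = 0 ∧ t.star i = i ∧ t.star j = j then
    M i j / 2 + 1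
  else if M i j ≠ 0 ∧ M i j % 2 = 0 ∧ t.star i = j then
    M i j / 2
  else M i j

/-- Words `a` and `b` differ by a half-braid move. -/
def HalfBraidMove (t : Twisting cs) (a b : List B) : Prop :=
  ∃ (v : List B) (i j : B), i ≠ j ∧ M i j ≠ 0 ∧ mstar t i j < M i j ∧
    a = altWord i j (mstar t i j) ++ v ∧ b = altWord j i (mstar t i j) ++ v

/-- Words `a` and `b` differ by a generalized half-braid move. -/
def GenHalfBraidMove (t : Twisting cs) (a b : List B) : Prop :=
  ∃ (r v : List B) (i j : B) (m : ℕ), i ≠ j ∧ 1 ≤ m ∧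
    a = r ++ altWord i j m ++ v ∧ b = r ++ altWord j i m ++ v ∧
    ∃ z : W, IsTwistedInvolution t z ∧
      IsInvolutionWord t z (r ++ altWord i j m) ∧ IsInvolutionWord t z (r ++ altWord j i m)

/-- `S` is an equivalence class of the equivalence relation on words generated by the
(symmetric) move relation `E`: any two elements of `S` are connected by a finite chain of
moves, and `S` is closed under moves. -/
def IsMoveClass (E : List B → List B → Prop) (S : Set (List B)) : Prop :=
  (∀ a ∈ S, ∀ b ∈ S, Relation.ReflTransGen E a b) ∧
  (∀ a ∈ S, ∀ b, E a b → b ∈ S)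

/-- The twisted Coxeter system is perfectly braided if each `R̂(w)`, for `w` a twisted
involution, is an equivalence class of the relation generated by braid moves and
half-braid moves. -/
def PerfectlyBraided (t : Twisting cs) : Prop :=
  ∀ w : W, IsTwistedInvolution t w →
    IsMoveClass (fun a b => BraidMove M a b ∨ HalfBraidMove t a b) (invWords t w)

end TwistedCoxeter

/-!
The twisting is bookkeeping: `*` preserves length, so `w* = w⁻¹` turns the right descent `i`
of `w` into the left descent `i*`, and `x ↦ x* w x⁻¹` preserves twisted involutions. What
remains is the lifting property: if `s` is a left and `s'` a right descent of `w` and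
`s w s' ≠ w`, then `ℓ(s w s') = ℓ(w) - 2`.

Instead of the exchange condition we use the Björner–Brenti sign `η(w, t) ∈ {±1}`. `W` acts on
`W × {±1}`, `s_i` conjugating the first factor and flipping the sign at `s_i`; this respects the
braid relations because every element occurs an even number of times in the inversion sequence
of `(s_i s_j)^m`. Evaluated along a reduced word, `η(w, t) = -1` puts `t` into the inversion
sequence, so `t` is a right inversion of `w`; hence `η(w, w⁻¹ s_i w) = -1` iff `s_i` is a left
descent of `w`. If `ℓ(s w s') = ℓ(w)`, the cocycle identity `η(u s', t) = η(s', t) η(u, s' t s')`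
with `u = w s'` and `t = w⁻¹ s w` gives `η(s', t) = -1`, i.e. `t = s'`, i.e. `s w s' = w`.
-/

open List

namespace CoxeterSystem

variable {B W : Type*} [Group W] {M : CoxeterMatrix B} (cs : CoxeterSystem M W)

local prefix:100 "s" => cs.simple
local prefix:100 "π" => cs.wordProd
local prefix:100 "ℓ" => cs.length

theorem prod_map_alternatingWord_two_mul {G : Type*} [Monoid G] (f : B → G) (i j : B) (m : ℕ) :
    ((alternatingWord i j (2 * m)).map f).prod = (f i * f j) ^ m := by
  induction m with
  | zero => simp [alternatingWord]
  | succ m ih =>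
    rw [Nat.mul_succ, alternatingWord_succ', alternatingWord_succ', if_neg (by simp),
      if_pos (even_two_mul m), map_cons, map_cons, prod_cons, prod_cons, ih, pow_succ',
      mul_assoc]

theorem rightInvSeq_alternatingWord (i j : B) (n : ℕ) :
    cs.rightInvSeq (alternatingWord i j n) =
      ((range n).map fun k => (s j * s i) ^ k * s j).reverse := by
  induction n generalizing i j with
  | zero => rfl
  | succ n ih =>
    rw [alternatingWord_succ, rightInvSeq_concat, ih, range_succ_eq_map]
    simp only [map_cons, reverse_cons, map_reverse, map_map, concat_eq_append, pow_zero, one_mul]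
    congr 3
    funext k
    simp only [Function.comp_apply, MulAut.conj_apply, inv_simple, pow_succ', mul_assoc,
      mul_pow_mul]

theorem even_count_rightInvSeq_alternatingWord (i j : B) (t : W) :
    Even ((cs.rightInvSeq (alternatingWord i j (2 * M i j))).count t) := by
  rw [rightInvSeq_alternatingWord, count_reverse, two_mul, range_add, map_append, map_map,
    count_append]
  convert Even.add_self _ using 4
  funext k
  simp [pow_add]

/-- The action of `s i` from Björner–Brenti, *Combinatorics of Coxeter Groups*, §1.4. -/
def simpleSignAction (i : B) : Function.End (W × ℤˣ) :=
  fun p => (s i * p.1 * s i, if p.1 = s i then -p.2 else p.2)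

theorem prod_map_simpleSignAction_apply (ω : List B) (t : W) (ε : ℤˣ) :
    (ω.map cs.simpleSignAction).prod (t, ε) =
      (π ω * t * (π ω)⁻¹, ε * (-1) ^ (cs.rightInvSeq ω).count t) := by
  induction ω with
  | nil => simp [Function.End.one_def]
  | cons i ω ih =>
    change cs.simpleSignAction i ((ω.map cs.simpleSignAction).prod (t, ε)) = _
    have hconj : π ω * t * (π ω)⁻¹ = s i ↔ (π ω)⁻¹ * s i * π ω = t := by
      constructor <;> intro h <;> rw [← h] <;> group
    rw [ih]
    simp only [simpleSignAction, rightInvSeq, count_cons, beq_iff_eq, wordProd_cons, hconj]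
    split_ifs <;> ext <;> simp [mul_assoc, pow_succ]

theorem isLiftable_simpleSignAction : M.IsLiftable cs.simpleSignAction := by
  intro i j
  funext ⟨t, ε⟩
  obtain ⟨c, hc⟩ := cs.even_count_rightInvSeq_alternatingWord i j t
  have hπ : π (alternatingWord i j (2 * M i j)) = 1 := by
    simpa [wordProd] using prod_map_alternatingWord_two_mul cs.simple i j (M i j)
  rw [← prod_map_alternatingWord_two_mul _ i j, prod_map_simpleSignAction_apply, hπ, hc]
  simp [← two_mul, pow_mul, Function.End.one_def]

def signAction : W →* Function.End (W × ℤˣ) := cs.lift ⟨_, cs.isLiftable_simpleSignAction⟩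

/-- The sign `η(w, t)` of Björner–Brenti. -/
def reflectionSign (w t : W) : ℤˣ := (cs.signAction w (t, 1)).2

theorem signAction_wordProd (ω : List B) :
    cs.signAction (π ω) = (ω.map cs.simpleSignAction).prod := by
  rw [wordProd, map_list_prod, map_map]
  congr 1
  exact map_congr_left fun i _ => cs.lift_apply_simple cs.isLiftable_simpleSignAction i

theorem reflectionSign_wordProd (ω : List B) (t : W) :
    cs.reflectionSign (π ω) t = (-1) ^ (cs.rightInvSeq ω).count t := by
  simp [reflectionSign, signAction_wordProd, prod_map_simpleSignAction_apply]

theorem signAction_apply (w t : W) (ε : ℤˣ) :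
    cs.signAction w (t, ε) = (w * t * w⁻¹, ε * cs.reflectionSign w t) := by
  obtain ⟨ω, rfl⟩ := cs.wordProd_surjective w
  rw [reflectionSign_wordProd, signAction_wordProd, prod_map_simpleSignAction_apply]

theorem reflectionSign_mul (u v t : W) :
    cs.reflectionSign (u * v) t = cs.reflectionSign v t * cs.reflectionSign u (v * t * v⁻¹) := by
  change (cs.signAction (u * v) (t, 1)).2 = _
  rw [map_mul]
  change (cs.signAction u (cs.signAction v (t, 1))).2 = _
  rw [signAction_apply, signAction_apply, one_mul]

theorem reflectionSign_simple (i : B) (t : W) :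
    cs.reflectionSign (s i) t = if t = s i then -1 else 1 := by
  simp [reflectionSign, signAction, simpleSignAction, cs.lift_apply_simple]

theorem isRightInversion_of_reflectionSign_eq_neg_one {w t : W}
    (h : cs.reflectionSign w t = -1) : cs.IsRightInversion w t := by
  obtain ⟨ω, hω, rfl⟩ := cs.exists_isReduced w
  refine cs.isRightInversion_of_mem_rightInvSeq hω (count_pos_iff.mp (Nat.pos_of_ne_zero ?_))
  intro h0
  rw [reflectionSign_wordProd, h0, pow_zero] at h
  exact absurd h (by decide)

theorem reflectionSign_conj_simple_eq_neg_one_iff (w : W) (i : B) :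
    cs.reflectionSign w (w⁻¹ * s i * w) = -1 ↔ cs.IsLeftDescent w i := by
  have of_eq : ∀ {u : W}, cs.reflectionSign u (u⁻¹ * s i * u) = -1 → cs.IsLeftDescent u i := by
    intro u h
    simpa [IsLeftDescent, mul_assoc] using (cs.isRightInversion_of_reflectionSign_eq_neg_one h).2
  refine ⟨of_eq, fun hw => ?_⟩
  have hsw : cs.reflectionSign (s i * w) ((s i * w)⁻¹ * s i * (s i * w)) = 1 := by
    refine (Int.units_eq_one_or _).resolve_right fun h => ?_
    have := of_eq h
    simp only [IsLeftDescent, simple_mul_simple_cancel_left] at this hw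
    omega
  calc cs.reflectionSign w (w⁻¹ * s i * w)
      = cs.reflectionSign (s i * (s i * w)) ((s i * w)⁻¹ * s i * (s i * w)) := by
        simp [mul_assoc]
    _ = -1 := by
        rw [reflectionSign_mul, hsw, one_mul, reflectionSign_simple, if_pos (by group)]

theorem length_simple_mul_mul_simple_add_two {w : W} {i j : B} (hi : cs.IsLeftDescent w i)
    (hj : cs.IsRightDescent w j) (hne : s i * w * s j ≠ w) :
    ℓ (s i * w * s j) + 2 = ℓ w := by
  obtain ⟨u, hw⟩ : ∃ u, u * s j = w := ⟨w * s j, by simp [mul_assoc]⟩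
  have hlu : ℓ u + 1 = ℓ w := by
    rcases cs.length_mul_simple u j with h | h
    · rw [hw] at h; exact h.symm
    · rw [IsRightDescent, ← hw, simple_mul_simple_cancel_right] at hj; omega
  rw [show s i * w * s j = s i * u by simp [← hw, mul_assoc], ← hlu]
  suffices ¬ ℓ u < ℓ (s i * u) by
    rcases cs.length_simple_mul u i with h | h <;> omega
  intro hlong
  have hu_sign : cs.reflectionSign u (u⁻¹ * s i * u) = 1 :=
    (Int.units_eq_one_or _).resolve_right fun h =>
      absurd ((cs.reflectionSign_conj_simple_eq_neg_one_iff u i).mp h) hlong.not_gt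
  have hsj : cs.reflectionSign (s j) (w⁻¹ * s i * w) = -1 := by
    have hconj : s j * (w⁻¹ * s i * w) * (s j)⁻¹ = u⁻¹ * s i * u := by
      rw [← hw]; group
    have h := cs.reflectionSign_mul u (s j) (w⁻¹ * s i * w)
    rwa [hw, (cs.reflectionSign_conj_simple_eq_neg_one_iff w i).mpr hi, hconj, hu_sign, mul_one,
      eq_comm] at h
  have heq : w⁻¹ * s i * w = s j := by
    by_contra h
    rw [reflectionSign_simple, if_neg h] at hsj
    exact absurd hsj (by decide)
  exact hne (by simp [← heq, mul_assoc])

end CoxeterSystem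

namespace TwistedCoxeter

section

variable {B W : Type*} [Group W] {M : CoxeterMatrix B} {cs : CoxeterSystem M W} (t : Twisting cs)

theorem Twisting.auto_wordProd (ω : List B) :
    t.auto (cs.wordProd ω) = cs.wordProd (ω.map t.star) := by
  simp only [CoxeterSystem.wordProd, map_list_prod, map_map]
  exact congrArg prod (map_congr_left fun i _ => t.auto_simple i)

theorem Twisting.length_auto (x : W) : cs.length (t.auto x) = cs.length x := by
  have length_auto_le : ∀ y : W, cs.length (t.auto y) ≤ cs.length y := fun y => by
    obtain ⟨ω, hω, rfl⟩ := cs.exists_isReduced y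
    rw [t.auto_wordProd, hω.eq]
    simpa using cs.length_wordProd_le (ω.map t.star)
  refine (length_auto_le x).antisymm ?_
  simpa [t.auto_auto] using length_auto_le (t.auto x)

variable {t}

theorem IsTwistedInvolution.auto_mul_mul_inv {w : W} (hw : IsTwistedInvolution t w) (x : W) :
    IsTwistedInvolution t (t.auto x * w * x⁻¹) := by
  rw [IsTwistedInvolution, map_mul, map_mul, map_inv, t.auto_auto, hw]
  group

theorem IsTwistedInvolution.isLeftDescent_star {w : W} (hw : IsTwistedInvolution t w) {i : B}
    (hi : cs.IsRightDescent w i) : cs.IsLeftDescent w (t.star i) := by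
  have h := t.length_auto (cs.simple (t.star i) * w)
  rw [map_mul, t.auto_simple, t.star_star, hw, ← cs.length_inv, mul_inv_rev, inv_inv,
    CoxeterSystem.inv_simple] at h
  rw [CoxeterSystem.IsLeftDescent, ← h]
  exact hi

end

/-- If `w` is a twisted involution, `ℓ(w * s i) < ℓ(w)` and
`(s i)* * w * (s i) ≠ w`, then `(s i)* * w * (s i)` is a twisted involution of
length `ℓ(w) - 2`. -/
theorem statement_1 {B W : Type*} [Group W] {M : CoxeterMatrix B} {cs : CoxeterSystem M W}
    (t : Twisting cs) (w : W) (hw : IsTwistedInvolution t w) (i : B)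
    (hdes : cs.length (w * cs.simple i) < cs.length w)
    (hne : t.auto (cs.simple i) * w * cs.simple i ≠ w) :
    IsTwistedInvolution t (t.auto (cs.simple i) * w * cs.simple i) ∧
      cs.length (t.auto (cs.simple i) * w * cs.simple i) + 2 = cs.length w := by
  refine ⟨by simpa using hw.auto_mul_mul_inv (cs.simple i), ?_⟩
  rw [t.auto_simple] at hne ⊢
  exact cs.length_simple_mul_mul_simple_add_two (hw.isLeftDescent_star hdes) hdes hne

end TwistedCoxeter
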